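/- Each of the three functions I_{−1}^m, I_0^m, I_1^m converges, uniformly in x ∈ ℝ as m → ∞, to the function x ↦ (1/3) ∫_{η1}^{η2} W(x − y) dy. -/

import Mathlib

/-!
Cut `[η1, η2]` into `m` blocks of `n` equal cells of width `d`. Translating one cell of a block onto
another moves the argument of `W` by at most the block width `|η2 - η1| / m`, so the integral over
any one cell differs from the average over the `n` cells of its block by at most `ε * |d|`, where
`ε` is the oscillation of `W` at that scale. Summing over the `m` blocks gives an error of at most
`ε * |η2 - η1| / n`, uniformly in `x`, and `ε → 0` as `m → ∞` because a continuous periodic `W`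
factors through a compact circle and is therefore uniformly continuous.
-/

open MeasureTheory Filter

/-- `I_{−1}^m(x) = Σ_{j=1}^{m} ∫_{A^m_{3j−2}} W(x − y) dy`, where
`A^m_i = [η1 + (i−1)(η2−η1)/(3m), η1 + i(η2−η1)/(3m))`. -/
noncomputable def Im1 (W : ℝ → ℝ) (η1 η2 : ℝ) (m : ℕ) (x : ℝ) : ℝ :=
  ∑ j ∈ Finset.range m,
    ∫ y in (η1 + (3 * (j : ℝ)) * (η2 - η1) / (3 * (m : ℝ)))..(
            η1 + (3 * (j : ℝ) + 1) * (η2 - η1) / (3 * (m : ℝ))), W (x - y)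

/-- `I_0^m(x) = Σ_{j=1}^{m} ∫_{A^m_{3j−1}} W(x − y) dy`. -/
noncomputable def I0m (W : ℝ → ℝ) (η1 η2 : ℝ) (m : ℕ) (x : ℝ) : ℝ :=
  ∑ j ∈ Finset.range m,
    ∫ y in (η1 + (3 * (j : ℝ) + 1) * (η2 - η1) / (3 * (m : ℝ)))..(
            η1 + (3 * (j : ℝ) + 2) * (η2 - η1) / (3 * (m : ℝ))), W (x - y)

/-- `I_1^m(x) = Σ_{j=1}^{m} ∫_{A^m_{3j}} W(x − y) dy`. -/
noncomputable def I1m (W : ℝ → ℝ) (η1 η2 : ℝ) (m : ℕ) (x : ℝ) : ℝ :=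
  ∑ j ∈ Finset.range m,
    ∫ y in (η1 + (3 * (j : ℝ) + 2) * (η2 - η1) / (3 * (m : ℝ)))..(
            η1 + (3 * (j : ℝ) + 3) * (η2 - η1) / (3 * (m : ℝ))), W (x - y)

theorem Function.Periodic.uniformContinuous_of_continuous {β : Type*} [UniformSpace β]
    {T : ℝ} (hT : 0 < T) {f : ℝ → β} (hf : Continuous f) (hper : Function.Periodic f T) :
    UniformContinuous f := by
  have : Fact (0 < T) := ⟨hT⟩
  have hlift : UniformContinuous hper.lift :=
    CompactSpace.uniformContinuous_of_continuous (continuous_quot_lift _ hf)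
  have hmk : UniformContinuous ((↑) : ℝ → AddCircle T) :=
    uniformContinuous_addMonoidHom_of_continuous (f := QuotientAddGroup.mk' _) continuous_quot_mk
  exact hlift.comp hmk

theorem abs_integral_shift_sub_le {g : ℝ → ℝ} (hg : Continuous g) {t ε : ℝ}
    (hshift : ∀ y, |g (y + t) - g y| ≤ ε) (a b : ℝ) :
    |(∫ y in a + t..b + t, g y) - ∫ y in a..b, g y| ≤ ε * |b - a| := by
  have hgt : Continuous fun y => g (y + t) := hg.comp (continuous_add_const t)
  rw [← intervalIntegral.integral_comp_add_right,
    ← intervalIntegral.integral_sub (hgt.intervalIntegrable a b) (hg.intervalIntegrable a b)]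
  exact intervalIntegral.norm_integral_le_of_norm_le_const (f := fun y => g (y + t) - g y)
    fun y _ => hshift y

theorem integral_eq_sum_cells {g : ℝ → ℝ} (hg : Continuous g) (a d : ℝ) (n : ℕ) :
    ∫ y in a..a + n * d, g y = ∑ k ∈ Finset.range n, ∫ y in a + k * d..a + k * d + d, g y := by
  have := intervalIntegral.sum_integral_adjacent_intervals (a := fun k : ℕ => a + k * d) (n := n)
    fun k _ => hg.intervalIntegrable (μ := volume) _ _
  simp only [Nat.cast_add, Nat.cast_one, Nat.cast_zero, zero_mul, add_zero, add_one_mul,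
    ← add_assoc] at this
  exact this.symm

theorem abs_integral_cell_sub_average_le {g : ℝ → ℝ} (hg : Continuous g) {n s : ℕ} (hs : s < n)
    {d ε : ℝ} (hshift : ∀ y t, |t| ≤ n * |d| → |g (y + t) - g y| ≤ ε) (a : ℝ) :
    |(∫ y in a + s * d..a + s * d + d, g y) - (1 / n) * ∫ y in a..a + n * d, g y| ≤ ε * |d| := by
  have hn : (0 : ℝ) < n := by exact_mod_cast Nat.zero_lt_of_lt hs
  have hcell : ∀ k ∈ Finset.range n, |(∫ y in a + s * d..a + s * d + d, g y) -
      ∫ y in a + k * d..a + k * d + d, g y| ≤ ε * |d| := by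
    intro k hk
    have hk : (k : ℝ) < n := by exact_mod_cast Finset.mem_range.mp hk
    have hs : (s : ℝ) < n := by exact_mod_cast hs
    have hsk : |((s : ℝ) - k) * d| ≤ n * |d| := by
      rw [abs_mul]
      gcongr
      rw [abs_le]
      constructor <;> linarith [(Nat.cast_nonneg s : (0 : ℝ) ≤ s), (Nat.cast_nonneg k : (0 : ℝ) ≤ k)]
    have := abs_integral_shift_sub_le hg (fun y => hshift y _ hsk) (a + k * d) (a + k * d + d)
    convert this using 4 <;> ring
  set I : ℕ → ℝ := fun k => ∫ y in a + k * d..a + k * d + d, g y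
  have hsum : I s - (1 / n) * ∑ k ∈ Finset.range n, I k
      = (1 / n) * ∑ k ∈ Finset.range n, (I s - I k) := by
    rw [Finset.sum_sub_distrib, Finset.sum_const, Finset.card_range, nsmul_eq_mul]
    field_simp
  calc |(∫ y in a + s * d..a + s * d + d, g y) - (1 / n) * ∫ y in a..a + n * d, g y|
      = |I s - (1 / n) * ∑ k ∈ Finset.range n, I k| := by rw [integral_eq_sum_cells hg]
    _ = (1 / n) * |∑ k ∈ Finset.range n, (I s - I k)| := by
        rw [hsum, abs_mul, abs_of_pos (by positivity)]
    _ ≤ (1 / n) * (n * (ε * |d|)) := by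
        gcongr
        refine (Finset.abs_sum_le_sum_abs _ _).trans ?_
        simpa using Finset.sum_le_sum hcell
    _ = ε * |d| := by field_simp

noncomputable def stripSum (W : ℝ → ℝ) (η1 η2 : ℝ) (n s m : ℕ) (x : ℝ) : ℝ :=
  ∑ j ∈ Finset.range m,
    ∫ y in η1 + (n * j + s) * (η2 - η1) / (n * m)..η1 + (n * j + s + 1) * (η2 - η1) / (n * m),
      W (x - y)

theorem abs_stripSum_sub_le {W : ℝ → ℝ} (hW : Continuous W) {n s m : ℕ} (hs : s < n)
    (hm : m ≠ 0) {η1 η2 ε : ℝ} (hosc : ∀ u v, |u - v| ≤ |η2 - η1| / m → |W u - W v| ≤ ε)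
    (x : ℝ) :
    |stripSum W η1 η2 n s m x - (1 / n) * ∫ y in η1..η2, W (x - y)| ≤ ε * |η2 - η1| / n := by
  have hn : (0 : ℝ) < n := by exact_mod_cast Nat.zero_lt_of_lt hs
  have hm : (0 : ℝ) < m := by exact_mod_cast Nat.pos_of_ne_zero hm
  have hg : Continuous fun y => W (x - y) := by fun_prop
  set d := (η2 - η1) / (n * m) with hd
  have hnd : n * |d| = |η2 - η1| / m := by
    rw [hd, abs_div, abs_of_pos (by positivity : (0 : ℝ) < n * m)]
    field_simp
  have hblocks : ∫ y in η1..η2, W (x - y) = ∑ j ∈ Finset.range m,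
      ∫ y in η1 + j * (n * d)..η1 + j * (n * d) + n * d, W (x - y) := by
    rw [← integral_eq_sum_cells hg]
    congr 1
    rw [hd]
    field_simp
    ring
  have hblock : ∀ j ∈ Finset.range m,
      |(∫ y in η1 + (n * j + s) * (η2 - η1) / (n * m)..η1 + (n * j + s + 1) * (η2 - η1) / (n * m),
          W (x - y)) - (1 / n) * ∫ y in η1 + j * (n * d)..η1 + j * (n * d) + n * d, W (x - y)|
        ≤ ε * |d| := by
    intro j _
    have hshift : ∀ y t, |t| ≤ n * |d| → |W (x - (y + t)) - W (x - y)| ≤ ε := fun y t ht =>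
      hosc _ _ (by rwa [← hnd, show x - (y + t) - (x - y) = -t by ring, abs_neg])
    have := abs_integral_cell_sub_average_le hg hs hshift (η1 + j * (n * d))
    convert this using 4 <;> rw [hd] <;> ring
  calc |stripSum W η1 η2 n s m x - (1 / n) * ∫ y in η1..η2, W (x - y)|
      ≤ ∑ j ∈ Finset.range m, ε * |d| := by
        rw [stripSum, hblocks, Finset.mul_sum, ← Finset.sum_sub_distrib]
        exact (Finset.abs_sum_le_sum_abs _ _).trans (Finset.sum_le_sum hblock)
    _ = ε * |η2 - η1| / n := by
        rw [Finset.sum_const, Finset.card_range, nsmul_eq_mul, hd, abs_div,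
          abs_of_pos (by positivity : (0 : ℝ) < n * m)]
        field_simp

theorem tendstoUniformly_stripSum {W : ℝ → ℝ} (hW : UniformContinuous W) (η1 η2 : ℝ)
    {n s : ℕ} (hs : s < n) :
    TendstoUniformly (stripSum W η1 η2 n s) (fun x => (1 / n) * ∫ y in η1..η2, W (x - y))
      atTop := by
  rw [Metric.tendstoUniformly_iff]
  intro ε hε
  set ε' := ε / (|η2 - η1| + 1)
  obtain ⟨δ, hδ, hWδ⟩ := Metric.uniformContinuous_iff.mp hW ε' (by positivity)
  have hfine : ∀ᶠ m : ℕ in atTop, |η2 - η1| / m < δ :=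
    (tendsto_const_div_atTop_nhds_zero_nat _).eventually (gt_mem_nhds hδ)
  filter_upwards [hfine, eventually_ne_atTop 0] with m hmδ hm x
  have hosc : ∀ u v, |u - v| ≤ |η2 - η1| / m → |W u - W v| ≤ ε' := fun u v huv =>
    (hWδ (show dist u v < δ from huv.trans_lt hmδ)).le
  have hn : (1 : ℝ) ≤ n := by exact_mod_cast Nat.one_le_of_lt hs
  rw [dist_comm, Real.dist_eq]
  calc _ ≤ ε' * |η2 - η1| / n := abs_stripSum_sub_le hW.continuous hs hm hosc x
    _ ≤ ε' * |η2 - η1| := div_le_self (by positivity) hn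
    _ < ε' * (|η2 - η1| + 1) := by gcongr; linarith
    _ = ε := div_mul_cancel₀ ε (by positivity)

theorem strips_tendstoUniformly_general
    (L : ℝ) (hL : 0 < L) (W : ℝ → ℝ) (hWcont : Continuous W)
    (hWper : Function.Periodic W (2 * L))
    (η1 η2 : ℝ) :
    TendstoUniformly (fun m x => Im1 W η1 η2 m x)
        (fun x => (1 / 3) * ∫ y in η1..η2, W (x - y)) atTop ∧
    TendstoUniformly (fun m x => I0m W η1 η2 m x)
        (fun x => (1 / 3) * ∫ y in η1..η2, W (x - y)) atTop ∧
    TendstoUniformly (fun m x => I1m W η1 η2 m x)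
        (fun x => (1 / 3) * ∫ y in η1..η2, W (x - y)) atTop := by
  have hW : UniformContinuous W := hWper.uniformContinuous_of_continuous (by positivity) hWcont
  have h (s : ℕ) (hs : s < 3) : TendstoUniformly (stripSum W η1 η2 3 s)
      (fun x => (1 / 3) * ∫ y in η1..η2, W (x - y)) atTop := by
    exact_mod_cast tendstoUniformly_stripSum hW η1 η2 hs
  have hI : Im1 W η1 η2 = stripSum W η1 η2 3 0 ∧ I0m W η1 η2 = stripSum W η1 η2 3 1 ∧
      I1m W η1 η2 = stripSum W η1 η2 3 2 := by
    refine ⟨?_, ?_, ?_⟩ <;> ext m x <;> refine Finset.sum_congr rfl fun j _ => ?_ <;>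
      push_cast <;> ring_nf
  obtain ⟨hIm1, hI0m, hI1m⟩ := hI
  exact ⟨hIm1 ▸ h 0 (by norm_num), hI0m ▸ h 1 (by norm_num), hI1m ▸ h 2 (by norm_num)⟩

/-- Each of `I_{−1}^m, I_0^m, I_1^m` converges uniformly in `x ∈ ℝ`, as `m → ∞`,
to `x ↦ (1/3) ∫_{η1}^{η2} W(x − y) dy`. -/
theorem strips_tendstoUniformly
    (L : ℝ) (hL : 0 < L) (W : ℝ → ℝ) (hWcont : Continuous W)
    (hWper : Function.Periodic W (2 * L))
    (η1 η2 : ℝ) (hη : η1 < η2) :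
    TendstoUniformly (fun m x => Im1 W η1 η2 m x)
        (fun x => (1 / 3) * ∫ y in η1..η2, W (x - y)) atTop ∧
    TendstoUniformly (fun m x => I0m W η1 η2 m x)
        (fun x => (1 / 3) * ∫ y in η1..η2, W (x - y)) atTop ∧
    TendstoUniformly (fun m x => I1m W η1 η2 m x)
        (fun x => (1 / 3) * ∫ y in η1..η2, W (x - y)) atTop :=
  strips_tendstoUniformly_general L hL W hWcont hWper η1 η2
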